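/- arXiv:2605.06292 — 6 statements merged into one kernel-verified Lean document; each statement's English description precedes it below -/
import Mathlib

section
/- A structure intervention on a one-variable TSEM is not expressible by any finite set of value interventions: consider the model with V = {X}, R(X) = {0,1}, F_X(x) = 1 for all x, and initial value 0. Under any intervention consisting of finitely many atomic value interventions do(X^{t_i} ← x_i), the resulting computation satisfies X = 1 at all sufficiently large steps; hence there is no finite value intervention whose resulting computation satisfies X = 0 at all steps i > 0 (which is what the structure intervention replacing F_X by the constant 0 achieves). -/
/-- A structure intervention on the one-variable TSEM with constant update
`f(x) = 1` is not expressible by finitely many value interventions: for any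
finite value intervention `σ : ℕ → Option (Fin 2)` (finitely many steps
intervened), the intervened computation `c` (`c 0 = (σ 0).getD 0` and, for
`i > 0`, `c i = (σ i).getD 1`, since `f` is constantly `1`) is eventually
constantly `1`; consequently it is not the computation that is `0` at every
step `i > 0` (which the structure intervention replacing `F_X` by the constant
`0` achieves). -/
theorem finite_value_interventions_cannot_force_zero
    (σ : ℕ → Option (Fin 2)) (hfin : {i : ℕ | (σ i).isSome}.Finite)
    (c : ℕ → Fin 2)
    (hc0 : c 0 = (σ 0).getD 0)
    (hc : ∀ i : ℕ, 0 < i → c i = (σ i).getD 1) :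
    (∃ N : ℕ, ∀ i : ℕ, N ≤ i → c i = 1) ∧ ¬ (∀ i : ℕ, 0 < i → c i = 0) := by
  obtain ⟨N, hN⟩ := hfin.bddAbove
  have key : ∀ i : ℕ, N + 1 ≤ i → c i = 1 := by
    intro i hi
    have hpos : 0 < i := by omega
    have hnone : σ i = none := by
      by_contra h
      have : (σ i).isSome := Option.isSome_iff_ne_none.mpr h
      have := hN this
      omega
    rw [hc i hpos, hnone]; rfl
  refine ⟨⟨N + 1, key⟩, fun h => ?_⟩
  have h1 := key (N + 1) le_rfl
  have h0 := h (N + 1) (by omega)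
  rw [h1] at h0
  exact absurd h0 (by decide)
end

section
/- Head-position invariant of the LBA simulation: along any branch c(0), c(1), ..., c(t) of the LBA causal calculator's computation tree, where d_k is the direction component stored in c(k)(X_0), the offset o_t = Σ_{k=1}^{t-1} d_k satisfies the invariant that c(t)(X_{j - o_t}) equals the symbol in tape cell C_j of the simulated LBA configuration at step t (where j = Σ_{k=1}^t d_k is the head position). In particular, the index of the variable holding the left endmarker ▷ at step t equals −o_t, i.e., it is shifted from its initial index 0 by exactly the negated sum of past head movements excluding the last. -/
/-- A configuration of the LBA causal calculator: `X₀` holds a triple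
(state, last written symbol, last direction); `X i` (`i ≠ 0`) holds a symbol. -/
abbrev CalcConf (Q Γ : Type) := (Q × Γ × ℤ) × ({i : ℤ // i ≠ 0} → Γ)

/-- The symbol held at position `i` of a calculator configuration. -/
def symAt {Q Γ : Type} (v : CalcConf Q Γ) (i : ℤ) : Γ :=
  if h : i = 0 then v.1.2.1 else v.2 ⟨i, h⟩

/-- An LBA configuration: state, head position, and tape. -/
abbrev LbaConf (Q Γ : Type) := Q × ℤ × (ℤ → Γ)

/-- An LBA transition performed with the transition tuple `tr = (q', γ', d)`:
`tr` must be enabled by `δ^F` on the scanned symbol; the state becomes `q'`,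
the scanned cell is rewritten to `γ'` and the head moves by `d`. -/
def lbaStepBy {Q Γ : Type} (δF : Q → Γ → Set (Q × Γ × ℤ))
    (tr : Q × Γ × ℤ) (x y : LbaConf Q Γ) : Prop :=
  tr ∈ δF x.1 (x.2.2 x.2.1) ∧
  y.1 = tr.1 ∧ y.2.1 = x.2.1 + tr.2.2 ∧
  y.2.2 = Function.update x.2.2 x.2.1 tr.2.1

/-- A causal-calculator transition performed with the transition tuple `tr`:
with `v(X₀) = (q, γ, d)`, `tr` must belong to `δ^F(q, sym v d)`; the new value
of `X₀` is `tr`, and each `X i` (`i ≠ 0`) receives `sym v (i + d)`. -/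
def calcStepBy {Q Γ : Type} (δF : Q → Γ → Set (Q × Γ × ℤ))
    (tr : Q × Γ × ℤ) (v w : CalcConf Q Γ) : Prop :=
  tr ∈ δF v.1.1 (symAt v v.1.2.2) ∧
  w.1 = tr ∧
  ∀ i : {i : ℤ // i ≠ 0}, w.2 i = symAt v (i.1 + v.1.2.2)

/-- Head-position invariant of the LBA simulation (condition (iii) of the
bisimulation in the proof of Theorem 1): along jointly-run branches `ls` of the
LBA and `cs` of the causal calculator, with `d k` the direction component stored
in `cs k (X₀)` and offset `o t = (∑_{k ≤ t} d k) − d t`, the symbol in tape cell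
`C j` of `ls t` equals the symbol held by variable `X_{j − o t}` of `cs t`; in
particular the variable holding the left endmarker `▷` at step `t` has index
`−(o t)`. -/
theorem lba_simulation_offset_invariant
    {Q Γ : Type} (δF : Q → Γ → Set (Q × Γ × ℤ)) (lm : Γ)
    (ls : ℕ → LbaConf Q Γ) (cs : ℕ → CalcConf Q Γ) (tr : ℕ → Q × Γ × ℤ)
    (hhead0 : (ls 0).2.1 = 0)
    (hdir0 : (cs 0).1.2.2 = 0)
    (hstate0 : (ls 0).1 = (cs 0).1.1)
    (htape0 : ∀ j : ℤ, (ls 0).2.2 j = symAt (cs 0) j)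
    (hlba : ∀ t : ℕ, lbaStepBy δF (tr t) (ls t) (ls (t + 1)))
    (hcalc : ∀ t : ℕ, calcStepBy δF (tr t) (cs t) (cs (t + 1)))
    (hlm : ∀ t : ℕ, (ls t).2.2 0 = lm) :
    let d : ℕ → ℤ := fun k => (cs k).1.2.2
    let o : ℕ → ℤ := fun t => (∑ k ∈ Finset.range (t + 1), d k) - d t
    (∀ (t : ℕ) (j : ℤ), (ls t).2.2 j = symAt (cs t) (j - o t)) ∧
    (∀ t : ℕ, symAt (cs t) (-(o t)) = lm) := by
  intro d o
  have hd : ∀ t, d (t + 1) = (tr t).2.2 := by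
    intro t
    show (cs (t + 1)).1.2.2 = (tr t).2.2
    rw [(hcalc t).2.1]
  have hhead : ∀ t, (ls t).2.1 = ∑ k ∈ Finset.range (t + 1), d k := by
    intro t
    induction t with
    | zero => simp [Finset.sum_range_one, hhead0, d, hdir0]
    | succ n ih =>
      rw [(hlba n).2.2.1, Finset.sum_range_succ, ← ih, hd]
  have ho : ∀ t, o (t + 1) = o t + d t := by
    intro t
    show (∑ k ∈ Finset.range (t + 2), d k) - d (t + 1)
        = (∑ k ∈ Finset.range (t + 1), d k) - d t + d t
    rw [Finset.sum_range_succ]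
    ring
  have hod : ∀ t, o t + d t = (ls t).2.1 := by
    intro t
    rw [hhead t]
    show (∑ k ∈ Finset.range (t + 1), d k) - d t + d t = _
    ring
  have main : ∀ (t : ℕ) (j : ℤ), (ls t).2.2 j = symAt (cs t) (j - o t) := by
    intro t
    induction t with
    | zero =>
      intro j
      have h0 : o 0 = 0 := by simp [o]
      rw [h0, sub_zero]; exact htape0 j
    | succ n ih =>
      intro j
      obtain ⟨_, _, _, htape⟩ := hlba n
      obtain ⟨_, hX0, hX⟩ := hcalc n
      rw [htape, ho]
      by_cases hj : j = (ls n).2.1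
      · have hz : j - (o n + d n) = 0 := by rw [hod n, hj]; ring
        rw [hz, hj, Function.update_self, symAt, dif_pos rfl, hX0]
      · have hnz : j - (o n + d n) ≠ 0 := by
          intro h
          apply hj
          rw [← hod n]
          linarith [h]
        rw [Function.update_of_ne hj]
        rw [symAt, dif_neg hnz, hX ⟨j - (o n + d n), hnz⟩]
        have : j - (o n + d n) + (cs n).1.2.2 = j - o n := by
          show j - (o n + d n) + d n = j - o n
          ring
        rw [this]
        exact ih j
  refine ⟨main, fun t => ?_⟩
  have := main t 0
  rw [hlm t, zero_sub] at this
  exact this.symm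
end

section
/- Soundness and completeness of the LBA causal calculator (Theorem 1): for every LBA A with tape length n and every input string s, A accepts s if and only if the LBA causal calculator M^A accepts s, i.e., there is a path from the initial configuration v_0(s) of M^A to a configuration whose X_0 component contains a final state, exactly when there is a path in the LBA's run tree from λ_s to a configuration in a final state. -/
open Classical

/-- The deterministified transition relation `δ^F`: on final states it loops in
place (`{(q, γ, 0)}`), otherwise it is the LBA transition relation `δ`. -/
noncomputable def deltaF {Q Γ : Type} (F : Set Q)
    (δ : Q → Γ → Set (Q × Γ × ℤ)) (q : Q) (γ : Γ) : Set (Q × Γ × ℤ) :=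
  if q ∈ F then {(q, γ, 0)} else δ q γ

/-- One step of the LBA: an enabled transition tuple `(q', γ', d)` is chosen,
the scanned cell is rewritten and the head moves by `d`. -/
def lbaStep {Q Γ : Type} (F : Set Q) (δ : Q → Γ → Set (Q × Γ × ℤ))
    (x y : LbaConf Q Γ) : Prop :=
  ∃ q' γ' d, (q', γ', d) ∈ deltaF F δ x.1 (x.2.2 x.2.1) ∧
    y.1 = q' ∧ y.2.1 = x.2.1 + d ∧
    y.2.2 = Function.update x.2.2 x.2.1 γ'

/-- The step relation of the LBA causal calculator, given by the structural
equations of Definition 7. -/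
def calcStep {Q Γ : Type} (F : Set Q) (δ : Q → Γ → Set (Q × Γ × ℤ))
    (v w : CalcConf Q Γ) : Prop :=
  w.1 ∈ deltaF F δ v.1.1 (symAt v v.1.2.2) ∧
  ∀ i : {i : ℤ // i ≠ 0}, w.2 i = symAt v (i.1 + v.1.2.2)

/-- Bisimulation relation. -/
def Bisim {Q Γ : Type} (v : CalcConf Q Γ) (x : LbaConf Q Γ) : Prop :=
  v.1.1 = x.1 ∧ ∀ i : ℤ, symAt v i = x.2.2 (x.2.1 - v.1.2.2 + i)

lemma bisim_scan {Q Γ : Type} {v : CalcConf Q Γ} {x : LbaConf Q Γ}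
    (hR : Bisim v x) : symAt v v.1.2.2 = x.2.2 x.2.1 := by
  have := hR.2 v.1.2.2
  simpa using this

lemma bisim_fwd {Q Γ : Type} (F : Set Q) (δ : Q → Γ → Set (Q × Γ × ℤ))
    {v : CalcConf Q Γ} {x y : LbaConf Q Γ} (hR : Bisim v x)
    (h : lbaStep F δ x y) : ∃ w, calcStep F δ v w ∧ Bisim w y := by
  obtain ⟨q', γ', d, hmem, hy1, hy2, hy3⟩ := h
  refine ⟨((q', γ', d), fun i => symAt v (i.1 + v.1.2.2)),
    ⟨by rw [bisim_scan hR, hR.1]; exact hmem, fun i => rfl⟩,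
    by simp [Bisim, hy1], fun i => ?_⟩
  rw [hy2, hy3]
  show symAt (((q', γ', d), fun i => symAt v (i.1 + v.1.2.2)) : CalcConf Q Γ) i
      = Function.update x.2.2 x.2.1 γ' (x.2.1 + d - d + i)
  rw [show x.2.1 + d - d + i = x.2.1 + i by ring, Function.update_apply]
  by_cases hi : i = 0
  · subst hi; simp [symAt]
  · rw [if_neg (by omega : x.2.1 + i ≠ x.2.1)]
    simp only [symAt, dif_neg hi]
    have := hR.2 (i + v.1.2.2)
    rw [show x.2.1 - v.1.2.2 + (i + v.1.2.2) = x.2.1 + i by ring] at this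
    exact this

lemma bisim_bwd {Q Γ : Type} (F : Set Q) (δ : Q → Γ → Set (Q × Γ × ℤ))
    {v w : CalcConf Q Γ} {x : LbaConf Q Γ} (hR : Bisim v x)
    (h : calcStep F δ v w) : ∃ y, lbaStep F δ x y ∧ Bisim w y := by
  obtain ⟨hmem, htape⟩ := h
  refine ⟨(w.1.1, x.2.1 + w.1.2.2, Function.update x.2.2 x.2.1 w.1.2.1),
    ⟨w.1.1, w.1.2.1, w.1.2.2, ?_, rfl, rfl, rfl⟩, rfl, fun i => ?_⟩
  · rw [← bisim_scan hR, ← hR.1]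
    exact hmem
  · show symAt w i = Function.update x.2.2 x.2.1 w.1.2.1 (x.2.1 + w.1.2.2 - w.1.2.2 + i)
    rw [show x.2.1 + w.1.2.2 - w.1.2.2 + i = x.2.1 + i by ring, Function.update_apply]
    by_cases hi : i = 0
    · subst hi; simp [symAt]
    · rw [if_neg (by omega : x.2.1 + i ≠ x.2.1)]
      simp only [symAt, dif_neg hi]
      rw [htape ⟨i, hi⟩]
      simp only [symAt]
      by_cases h2 : i + v.1.2.2 = 0
      · rw [dif_pos h2]
        have := hR.2 (i + v.1.2.2)
        rw [show x.2.1 - v.1.2.2 + (i + v.1.2.2) = x.2.1 + i by ring,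
          show symAt v (i + v.1.2.2) = v.1.2.1 by simp [symAt, h2]] at this
        exact this
      · rw [dif_neg h2]
        have := hR.2 (i + v.1.2.2)
        rw [show x.2.1 - v.1.2.2 + (i + v.1.2.2) = x.2.1 + i by ring,
          show symAt v (i + v.1.2.2) = v.2 ⟨i + v.1.2.2, h2⟩ by simp [symAt, h2]] at this
        exact this

/-- Theorem 1 (soundness and completeness of the LBA causal calculator): for an
LBA with tape of length `n`, endmarkers `lm`, `rm` and initial tape `T₀`
(cell `0` = `▷`, cell `n+1` = `◁`, input in between), the LBA accepts — i.e.
reaches a configuration in a final state from `(q₀, 0, T₀)` — if and only if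
the causal calculator accepts, i.e. reaches from its initial configuration
`(X₀ = (q₀, T₀ 0, 0), X i = T₀ i)` a configuration whose `X₀` component
contains a final state. -/
theorem lba_iff_causal_calculator
    {Q Γ : Type} (q₀ : Q) (F : Set Q) (δ : Q → Γ → Set (Q × Γ × ℤ))
    (n : ℕ) (lm rm : Γ)
    (hdir : ∀ q γ q' γ' d, (q', γ', d) ∈ δ q γ → d = -1 ∨ d = 0 ∨ d = 1)
    (hlm : ∀ q q' γ' d, (q', γ', d) ∈ δ q lm → γ' = lm ∧ d ≠ -1)
    (hrm : ∀ q q' γ' d, (q', γ', d) ∈ δ q rm → γ' = rm ∧ d ≠ 1)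
    (T₀ : ℤ → Γ) (hT₀l : T₀ 0 = lm) (hT₀r : T₀ ((n : ℤ) + 1) = rm) :
    (∃ x : LbaConf Q Γ,
        Relation.ReflTransGen (lbaStep F δ) (q₀, 0, T₀) x ∧ x.1 ∈ F) ↔
    (∃ v : CalcConf Q Γ,
        Relation.ReflTransGen (calcStep F δ)
          ((q₀, T₀ 0, 0), fun i => T₀ i.1) v ∧ v.1.1 ∈ F) := by
  set v₀ : CalcConf Q Γ := ((q₀, T₀ 0, 0), fun i => T₀ i.1) with hv₀
  have hinit : Bisim v₀ (q₀, 0, T₀) := by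
    refine ⟨rfl, fun i => ?_⟩
    show symAt v₀ i = T₀ ((0 : ℤ) - 0 + i)
    rw [show (0 : ℤ) - 0 + i = i by ring]
    by_cases hi : i = 0
    · subst hi; simp [symAt, hv₀]
    · simp [symAt, hi, hv₀]
  constructor
  · rintro ⟨x, hx, hxF⟩
    have key : ∀ y, Relation.ReflTransGen (lbaStep F δ) (q₀, 0, T₀) y →
        ∃ v, Relation.ReflTransGen (calcStep F δ) v₀ v ∧ Bisim v y := by
      intro y hy
      induction hy with
      | refl => exact ⟨v₀, .refl, hinit⟩
      | tail _ hstep ih =>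
          obtain ⟨v, hv, hR⟩ := ih
          obtain ⟨w, hw, hR'⟩ := bisim_fwd F δ hR hstep
          exact ⟨w, hv.tail hw, hR'⟩
    obtain ⟨v, hv, hR⟩ := key x hx
    exact ⟨v, hv, by rw [hR.1]; exact hxF⟩
  · rintro ⟨v, hv, hvF⟩
    have key : ∀ w, Relation.ReflTransGen (calcStep F δ) v₀ w →
        ∃ y, Relation.ReflTransGen (lbaStep F δ) (q₀, 0, T₀) y ∧ Bisim w y := by
      intro w hw
      induction hw with
      | refl => exact ⟨(q₀, 0, T₀), .refl, hinit⟩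
      | tail _ hstep ih =>
          obtain ⟨y, hy, hR⟩ := ih
          obtain ⟨y', hy', hR'⟩ := bisim_bwd F δ hR hstep
          exact ⟨y', hy.tail hy', hR'⟩
    obtain ⟨y, hy, hR⟩ := key v hv
    exact ⟨y, hy, by rw [← hR.1]; exact hvF⟩
end

section
/- Soundness and completeness of the deterministic TM causal calculator (Transition lemma / Lemma 1): for any two TM configurations λ₁, λ₂, the TM steps λ₁ ⟶_T λ₂ if and only if the translated causal-calculator configurations step v_{λ₁} ⟶_{M^T} v_{λ₂}, where the translation maps a TM configuration C_{-i}...C_{-1} q C_0 ... C_j (head-relative indexing) to the assignment S = q, X_k = C_k for -i ≤ k ≤ j, and X_k = # elsewhere. -/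
open Classical

/-- A TM configuration with head-relative cell indexing: the scanned cell has
index `0`. -/
structure TMConf (Q Γ : Type) where
  state : Q
  tape : ℤ → Γ

/-- A configuration of the TM causal calculator (Definition 10): the variable
`S` holds a state, and each variable `X k` (`k ∈ ℤ`) holds a tape symbol. -/
structure CCConf (Q Γ : Type) where
  S : Q
  X : ℤ → Γ

/-- One step of the deterministic TM (head-relative indexing): if the state is
final the configuration is unchanged; otherwise with `δ q (tape 0) = (q', σ, d)`
the scanned cell is rewritten to `σ` and the whole tape is shifted by `d`. -/
noncomputable def tmNext {Q Γ : Type} (F : Set Q) (δ : Q → Γ → Q × Γ × ℤ)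
    (x : TMConf Q Γ) : TMConf Q Γ :=
  if x.state ∈ F then x
  else
    { state := (δ x.state (x.tape 0)).1,
      tape := fun k =>
        Function.update x.tape 0 (δ x.state (x.tape 0)).2.1
          (k + (δ x.state (x.tape 0)).2.2) }

/-- The TM step relation. -/
noncomputable def tmStep {Q Γ : Type} (F : Set Q) (δ : Q → Γ → Q × Γ × ℤ)
    (x y : TMConf Q Γ) : Prop :=
  y = tmNext F δ x

/-- The update function of the TM causal calculator, given by the structural
equations of Definition 10 (with `Out`, `Sym`, `Dir` the components of `δ`):
if `S ∈ F` everything is unchanged; otherwise `S` becomes `Out(q, X 0)`, the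
cells `X k` for `k ∉ {-1, 1}` receive `X (k + d)`, and `X (-1)`, `X 1` receive
either the shifted neighbour or the freshly written symbol `Sym(q, X 0)`
according to the direction `d = Dir(q, X 0)`. -/
noncomputable def calcNext {Q Γ : Type} (F : Set Q) (δ : Q → Γ → Q × Γ × ℤ)
    (v : CCConf Q Γ) : CCConf Q Γ :=
  if v.S ∈ F then v
  else
    { S := (δ v.S (v.X 0)).1,
      X := fun k =>
        if k = -1 then
          (if (δ v.S (v.X 0)).2.2 = -1 then v.X (-2) else (δ v.S (v.X 0)).2.1)
        else if k = 1 then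
          (if (δ v.S (v.X 0)).2.2 = -1 then (δ v.S (v.X 0)).2.1 else v.X 2)
        else
          (if (δ v.S (v.X 0)).2.2 = -1 then v.X (k - 1) else v.X (k + 1)) }

/-- The translation `τ` from TM configurations to causal-calculator
configurations: `S = q` and `X k = C k` for all `k`. -/
def tau {Q Γ : Type} (x : TMConf Q Γ) : CCConf Q Γ :=
  { S := x.state, X := x.tape }

/-- Lemma 1 (transition lemma): the deterministic TM steps `λ₁ ⟶_T λ₂` if and
only if the translated configurations step in the TM causal calculator,
`τ λ₁ ⟶_{M^T} τ λ₂`. -/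
theorem tm_step_iff_calc_step
    {Q Γ : Type} (F : Set Q) (δ : Q → Γ → Q × Γ × ℤ)
    (hdir : ∀ q γ, (δ q γ).2.2 = -1 ∨ (δ q γ).2.2 = 1)
    (x y : TMConf Q Γ) :
    tmStep F δ x y ↔ calcNext F δ (tau x) = tau y := by
  have key : calcNext F δ (tau x) = tau (tmNext F δ x) := by
    by_cases h : x.state ∈ F
    · simp [calcNext, tmNext, tau, h]
    · simp only [calcNext, tmNext, tau, h, if_neg h, if_false]
      congr 1
      funext k
      rcases hdir x.state (x.tape 0) with hd | hd <;> simp only [hd] <;>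
        simp only [Function.update_apply] <;>
        split_ifs <;>
        first | rfl | omega | (exfalso; omega) | (congr 1; omega) | exact (False.elim ‹False›)
  constructor
  · rintro rfl
    exact key.symm ▸ rfl
  · intro h
    have : tau (tmNext F δ x) = tau y := key ▸ h
    have hy : tmNext F δ x = y := by
      have h1 := congrArg CCConf.S this
      have h2 := congrArg CCConf.X this
      cases y; cases hmn : tmNext F δ x
      simp_all [tau]
    exact hy.symm
end

section
/- Turing completeness of TSEMs with countably many variables (Theorem 2): a deterministic Turing machine T accepts a string s (its run from the initial configuration reaches a final state) if and only if the TM causal calculator M^T accepts s (its computation from the translated initial configuration reaches a configuration with S = q^F for some q^F ∈ F). -/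
open Classical

lemma tau_step {Q Γ : Type} (F : Set Q) (δ : Q → Γ → Q × Γ × ℤ)
    (hdir : ∀ q γ, (δ q γ).2.2 = -1 ∨ (δ q γ).2.2 = 1)
    (x : TMConf Q Γ) : tau (tmNext F δ x) = calcNext F δ (tau x) := by
  unfold tmNext calcNext tau
  by_cases h : x.state ∈ F
  · simp [h]
  · simp only [h, if_neg, if_false]
    refine CCConf.mk.injEq _ _ _ _ ▸ ⟨rfl, ?_⟩
    funext k
    rcases hdir x.state (x.tape 0) with hd | hd <;>
      simp only [hd, Function.update, eq_rec_constant, dite_eq_ite, if_true] <;>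
      split_ifs <;> first | rfl | omega | exact absurd ‹False› not_false | (congr 1; omega)

lemma tau_iter {Q Γ : Type} (F : Set Q) (δ : Q → Γ → Q × Γ × ℤ)
    (hdir : ∀ q γ, (δ q γ).2.2 = -1 ∨ (δ q γ).2.2 = 1)
    (x : TMConf Q Γ) (m : ℕ) :
    tau ((tmNext F δ)^[m] x) = (calcNext F δ)^[m] (tau x) := by
  induction m with
  | zero => rfl
  | succ n ih =>
      rw [Function.iterate_succ_apply', Function.iterate_succ_apply',
        tau_step F δ hdir, ih]

/-- Theorem 2 (Turing completeness of TSEMs with countably many variables): a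
deterministic TM accepts — its run from `x₀` reaches a configuration in a final
state — if and only if the TM causal calculator accepts, i.e. its (deterministic)
computation from the translated initial configuration `τ x₀` reaches a
configuration with `S = q^F` for some final state `q^F ∈ F`. -/
theorem tm_accepts_iff_calculator_accepts
    {Q Γ : Type} (F : Set Q) (δ : Q → Γ → Q × Γ × ℤ)
    (hdir : ∀ q γ, (δ q γ).2.2 = -1 ∨ (δ q γ).2.2 = 1)
    (x₀ : TMConf Q Γ) :
    (∃ m : ℕ, ((tmNext F δ)^[m] x₀).state ∈ F) ↔
    (∃ m : ℕ, ((calcNext F δ)^[m] (tau x₀)).S ∈ F) := by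
  constructor
  · rintro ⟨m, hm⟩
    exact ⟨m, by rw [← tau_iter F δ hdir]; exact hm⟩
  · rintro ⟨m, hm⟩
    exact ⟨m, by rw [← tau_iter F δ hdir] at hm; exact hm⟩
end

section
/- Soundness and completeness of the NTM causal calculator (Theorem 3): a nondeterministic Turing machine T* accepts a string s if and only if the corresponding NTM causal calculator M^{T*} accepts s, where acceptance of M^{T*} means some finite sequence of transitions from the initial configuration reaches a configuration whose X_0 component contains a final state, and the correspondence is witnessed by a direction-sequence-indexed bisimulation between the run tree of T* and the computation tree of M^{T*}. -/
open Classical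

/-- An NTM configuration with head-relative indexing: the scanned cell has
index `0`. -/
structure NTMConf (Q Γ : Type) where
  state : Q
  tape : ℤ → Γ

/-- One NTM step: a tuple `(q', γ', d) ∈ δ^F(q, tape 0)` is chosen, the scanned
cell is rewritten to `γ'`, and the tape is shifted by `d` (head-relative
indexing). -/
def ntmStep {Q Γ : Type} (F : Set Q) (δ : Q → Γ → Set (Q × Γ × ℤ))
    (x y : NTMConf Q Γ) : Prop :=
  ∃ q' γ' d, (q', γ', d) ∈ deltaF F δ x.state (x.tape 0) ∧
    y.state = q' ∧
    ∀ k : ℤ, y.tape k = Function.update x.tape 0 γ' (k + d)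

/-- Translate a calculator configuration to the NTM configuration it encodes:
the tape at cell `k` is the symbol at offset `k + d` where `d` is the last
move stored in `X₀`. -/
def toNTM {Q Γ : Type} (v : CalcConf Q Γ) : NTMConf Q Γ :=
  ⟨v.1.1, fun k => symAt v (k + v.1.2.2)⟩

lemma toNTM_tape_zero {Q Γ : Type} (v : CalcConf Q Γ) :
    (toNTM v).tape 0 = symAt v v.1.2.2 := by
  simp [toNTM]

lemma calcStep_toNTM {Q Γ : Type} (F : Set Q) (δ : Q → Γ → Set (Q × Γ × ℤ))
    {v w : CalcConf Q Γ} (h : calcStep F δ v w) :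
    ntmStep F δ (toNTM v) (toNTM w) := by
  obtain ⟨h1, h2⟩ := h
  refine ⟨w.1.1, w.1.2.1, w.1.2.2, ?_, rfl, ?_⟩
  · rw [toNTM_tape_zero]; exact h1
  · intro k
    show symAt w (k + w.1.2.2) = _
    rw [Function.update_apply]
    by_cases hk : k + w.1.2.2 = 0
    · simp [symAt, hk]
    · simp only [symAt, dif_neg hk, if_neg hk, h2]
      show symAt v _ = symAt v _
      ring_nf

lemma ntmStep_of_toNTM {Q Γ : Type} (F : Set Q) (δ : Q → Γ → Set (Q × Γ × ℤ))
    {v : CalcConf Q Γ} {y : NTMConf Q Γ} (h : ntmStep F δ (toNTM v) y) :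
    ∃ w, calcStep F δ v w ∧ toNTM w = y := by
  obtain ⟨q', γ', d, hmem, hst, htape⟩ := h
  refine ⟨((q', γ', d), fun i => symAt v (i.1 + v.1.2.2)), ⟨?_, fun i => rfl⟩, ?_⟩
  · rw [toNTM_tape_zero] at hmem; exact hmem
  · obtain ⟨ys, yt⟩ := y
    dsimp only at hst htape
    subst hst
    show NTMConf.mk _ _ = _
    simp only [NTMConf.mk.injEq, true_and]
    funext k
    rw [htape k, Function.update_apply]
    show symAt _ (k + d) = _
    by_cases hk : k + d = 0
    · simp [symAt, hk]
    · simp only [symAt, dif_neg hk, if_neg hk]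
      show symAt v _ = symAt v _
      ring_nf

lemma toNTM_init {Q Γ : Type} (q₀ : Q) (T₀ : ℤ → Γ) :
    toNTM (Q := Q) (Γ := Γ) ((q₀, T₀ 0, 0), fun i => T₀ i.1) = ⟨q₀, T₀⟩ := by
  simp only [toNTM, NTMConf.mk.injEq, true_and]
  funext k
  by_cases hk : k = 0 <;> simp [symAt, hk]

/-- Theorem 3 (soundness and completeness of the NTM causal calculator): the
nondeterministic TM accepts an input tape `T₀` — some finite run from
`(q₀, T₀)` reaches a final state — if and only if the NTM causal calculator
reaches, from the initial configuration `(X₀ = (q₀, T₀ 0, 0), X i = T₀ i)`, a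
configuration whose `X₀` component contains a final state. -/
theorem ntm_accepts_iff_calculator_accepts
    {Q Γ : Type} (q₀ : Q) (F : Set Q) (δ : Q → Γ → Set (Q × Γ × ℤ))
    (hdir : ∀ q γ q' γ' d, (q', γ', d) ∈ δ q γ → d = -1 ∨ d = 0 ∨ d = 1)
    (T₀ : ℤ → Γ) :
    (∃ x : NTMConf Q Γ,
        Relation.ReflTransGen (ntmStep F δ) ⟨q₀, T₀⟩ x ∧ x.state ∈ F) ↔
    (∃ v : CalcConf Q Γ,
        Relation.ReflTransGen (calcStep F δ)
          ((q₀, T₀ 0, 0), fun i => T₀ i.1) v ∧ v.1.1 ∈ F) := by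
  set v₀ : CalcConf Q Γ := ((q₀, T₀ 0, 0), fun i => T₀ i.1) with hv₀
  constructor
  · rintro ⟨x, hrun, hF⟩
    suffices h : ∃ v, Relation.ReflTransGen (calcStep F δ) v₀ v ∧ toNTM v = x by
      obtain ⟨v, hv, hvx⟩ := h
      exact ⟨v, hv, by rw [show v.1.1 = (toNTM v).state from rfl, hvx]; exact hF⟩
    clear hF
    induction hrun with
    | refl => exact ⟨v₀, Relation.ReflTransGen.refl, toNTM_init q₀ T₀⟩
    | tail _ hstep ih =>
      obtain ⟨v, hv, rfl⟩ := ih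
      obtain ⟨w, hw, hwy⟩ := ntmStep_of_toNTM F δ hstep
      exact ⟨w, hv.tail hw, hwy⟩
  · rintro ⟨v, hrun, hF⟩
    refine ⟨toNTM v, ?_, hF⟩
    have : Relation.ReflTransGen (ntmStep F δ) (toNTM v₀) (toNTM v) := Relation.ReflTransGen.lift toNTM (fun a b h => calcStep_toNTM F δ h) _ _ hrun
    rwa [hv₀, toNTM_init q₀ T₀] at this
end
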